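/- The arrowhead matrix Arw(x) is invertible if and only if x_0² ≠ ‖x̄‖², and in that case its inverse is (1/(x_0² − ‖x̄‖²)) · [[x_0, −x̄ᵀ],[−x̄, ((x_0² − ‖x̄‖²)/x_0) I_n + (1/x_0) x̄ x̄ᵀ]] (assuming x_0 ≠ 0). -/

import Mathlib

/-- The arrowhead matrix `Arw(x) = [[x₀, x̄ᵀ],[x̄, x₀ Iₙ]]` of `x = (x₀; x̄) ∈ ℝ^(n+1)`. -/
def Arw {n : ℕ} (x0 : ℝ) (x : EuclideanSpace ℝ (Fin n)) :
    Matrix (Fin 1 ⊕ Fin n) (Fin 1 ⊕ Fin n) ℝ :=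
  Matrix.fromBlocks (Matrix.of fun _ _ => x0) (Matrix.of fun _ j => x j)
    (Matrix.of fun i _ => x i) (x0 • (1 : Matrix (Fin n) (Fin n) ℝ))

lemma norm_sq_eq {n : ℕ} (x : EuclideanSpace ℝ (Fin n)) : ‖x‖ ^ 2 = ∑ i, x i ^ 2 := by
  rw [EuclideanSpace.norm_eq, Real.sq_sqrt (by positivity)]
  simp [sq_abs]

lemma key {n : ℕ} (x0 : ℝ) (x : EuclideanSpace ℝ (Fin n)) (hx0 : x0 ≠ 0) :
    Arw x0 x *
      Matrix.fromBlocks (Matrix.of fun _ _ => x0) (Matrix.of fun _ j => -x j)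
        (Matrix.of fun i _ => -x i)
        (((x0 ^ 2 - ‖x‖ ^ 2) / x0) • (1 : Matrix (Fin n) (Fin n) ℝ) +
          (1 / x0) • Matrix.vecMulVec (fun i => x i) (fun i => x i)) =
      (x0 ^ 2 - ‖x‖ ^ 2) • 1 := by
  have hn := norm_sq_eq x
  ext i j
  rcases i with i | i <;> rcases j with j | j <;>
    simp [Arw, Matrix.mul_apply, Fintype.sum_sum_type, Matrix.one_apply,
      Matrix.vecMulVec_apply, Matrix.smul_apply, hn, mul_add, Finset.sum_add_distrib,
      Finset.mul_sum]
  · rw [if_pos (Subsingleton.elim i j)]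
    simp only [pow_two]
    ring
  · rw [Finset.sum_congr rfl
      (fun k _ => by ring :
        ∀ k ∈ Finset.univ, x k * (x0⁻¹ * (x k * x j)) = x k ^ 2 * (x0⁻¹ * x j)),
      ← Finset.sum_mul]
    field_simp
    ring
  · ring
  · rcases eq_or_ne i j with h | h
    · subst h
      simp only [if_pos rfl]
      field_simp
      ring
    · simp only [if_neg h]
      field_simp
      ring

/-- For `x₀ ≠ 0`, the arrowhead matrix `Arw(x)` is invertible iff `x₀² ≠ ‖x̄‖²`,
and in that case its inverse is
`(1/(x₀² - ‖x̄‖²)) [[x₀, -x̄ᵀ],[-x̄, ((x₀² - ‖x̄‖²)/x₀) Iₙ + (1/x₀) x̄ x̄ᵀ]]`. -/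
theorem arw_inverse {n : ℕ} (x0 : ℝ) (x : EuclideanSpace ℝ (Fin n)) (hx0 : x0 ≠ 0) :
    (IsUnit (Arw x0 x) ↔ x0 ^ 2 ≠ ‖x‖ ^ 2) ∧
    (x0 ^ 2 ≠ ‖x‖ ^ 2 →
      (Arw x0 x)⁻¹ =
        (x0 ^ 2 - ‖x‖ ^ 2)⁻¹ •
          Matrix.fromBlocks (Matrix.of fun _ _ => x0) (Matrix.of fun _ j => -x j)
            (Matrix.of fun i _ => -x i)
            (((x0 ^ 2 - ‖x‖ ^ 2) / x0) • (1 : Matrix (Fin n) (Fin n) ℝ) +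
              (1 / x0) • Matrix.vecMulVec (fun i => x i) (fun i => x i))) := by
  have hright : ∀ _ : x0 ^ 2 ≠ ‖x‖ ^ 2,
      Arw x0 x *
        ((x0 ^ 2 - ‖x‖ ^ 2)⁻¹ •
          Matrix.fromBlocks (Matrix.of fun _ _ => x0) (Matrix.of fun _ j => -x j)
            (Matrix.of fun i _ => -x i)
            (((x0 ^ 2 - ‖x‖ ^ 2) / x0) • (1 : Matrix (Fin n) (Fin n) ℝ) +
              (1 / x0) • Matrix.vecMulVec (fun i => x i) (fun i => x i))) = 1 := by
    intro h
    have hs : x0 ^ 2 - ‖x‖ ^ 2 ≠ 0 := sub_ne_zero.mpr h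
    rw [Matrix.mul_smul, key x0 x hx0, smul_smul, inv_mul_cancel₀ hs, one_smul]
  constructor
  · constructor
    · intro hu h
      have hn := norm_sq_eq x
      have hdet : (Arw x0 x).det = 0 := by
        rw [← Matrix.exists_mulVec_eq_zero_iff]
        refine ⟨Sum.elim (fun _ => x0) (fun i => -x i), ?_, ?_⟩
        · intro hv
          have := congrFun hv (Sum.inl 0)
          simp at this
          exact hx0 this
        · funext i
          rcases i with i | i <;>
            simp [Arw, Matrix.mulVec, dotProduct, Fintype.sum_sum_type,
              Matrix.one_apply, mul_comm]
          · have hsum : x0 * x0 = ∑ k, x k * x k := by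
              have h2 : x0 ^ 2 = ∑ k, x k ^ 2 := by rw [h, hn]
              simpa [pow_two] using h2
            linarith
      rw [Matrix.isUnit_iff_isUnit_det, isUnit_iff_ne_zero] at hu
      exact hu hdet
    · intro h
      exact (Matrix.isUnit_iff_isUnit_det _).mpr (Matrix.isUnit_det_of_right_inverse (hright h))
  · intro h
    exact Matrix.inv_eq_right_inv (hright h)
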